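/- arXiv:0802.3317 — 6 statements merged into one kernel-verified Lean document; each statement's English description precedes it below -/
import Mathlib

section
/- For each fixed t > 0, the function g(t,p) = -((1+p)/p) · ln(1 + p - p·e^{2t}) is strictly monotone increasing in p on the interval p < (e^{2t}-1)^{-1}, p ≠ 0, satisfies g(t,-1) = 0, and tends to -∞ as p → -∞. -/
/-!
Write `y = 1 + p - p E = 1 - (E - 1) p` with `E = e^{2t} > 1`. For `p ≠ 0` the function splits as
`g = (E - 1) · log y / (y - 1) - log y`. Here `log y / (y - 1)` is the slope of the concave
function `log` between `1` and `y`, hence strictly decreasing in `y`, and so is `-log y`;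
as `y` is a strictly decreasing function of `p`, `g` is strictly increasing, across `p = 0` as well.
For `p < 0` we have `y > 1` and `log y ≤ y - 1`, so `g ≤ (E - 1) - log y → -∞`.
-/

open Real Filter Set

/-- The function `g(t, p)` with `e^{2t}` replaced by a parameter `E`. -/
noncomputable def g (E p : ℝ) : ℝ := -((1 + p) / p) * log (1 + p - p * E)

lemma strictAntiOn_log_div_sub_one :
    StrictAntiOn (fun y : ℝ => log y / (y - 1)) (Ioi 0 \ {1}) := by
  intro x hx y hy hxy
  simpa using strictConcaveOn_log_Ioi.secant_strict_mono (a := 1) (mem_Ioi.2 one_pos)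
    hx.1 hy.1 hx.2 hy.2 hxy

lemma log_div_sub_one_le_one {y : ℝ} (hy : 1 < y) : log y / (y - 1) ≤ 1 :=
  (div_le_one (sub_pos.2 hy)).2 (log_le_sub_one_of_pos (by linarith))

lemma g_eq_of_ne_zero {E p : ℝ} (hE : E ≠ 1) (hp : p ≠ 0) :
    g E p = (E - 1) * (log (1 + p - p * E) / (1 + p - p * E - 1)) - log (1 + p - p * E) := by
  have hE' : E - 1 ≠ 0 := sub_ne_zero.2 hE
  have hy : 1 + p - p * E - 1 = -(p * (E - 1)) := by ring
  rw [g, hy]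
  field_simp
  ring

lemma one_add_sub_mul_pos {E p : ℝ} (hE : 1 < E) (hp : p < (E - 1)⁻¹) : 0 < 1 + p - p * E := by
  have h := mul_lt_mul_of_pos_right hp (sub_pos.2 hE)
  rw [inv_mul_cancel₀ (sub_pos.2 hE).ne'] at h
  linarith

lemma one_add_sub_mul_ne_one {E p : ℝ} (hE : E ≠ 1) (hp : p ≠ 0) : 1 + p - p * E ≠ 1 := by
  have h := mul_ne_zero hp (sub_ne_zero.2 hE.symm)
  contrapose! h
  linarith

lemma g_strictMonoOn {E : ℝ} (hE : 1 < E) :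
    StrictMonoOn (g E) {p : ℝ | p < (E - 1)⁻¹ ∧ p ≠ 0} := by
  have hy_mem : ∀ p ∈ {p : ℝ | p < (E - 1)⁻¹ ∧ p ≠ 0}, 1 + p - p * E ∈ Ioi 0 \ {1} :=
    fun p ⟨hp, hp0⟩ => ⟨one_add_sub_mul_pos hE hp, one_add_sub_mul_ne_one hE.ne' hp0⟩
  intro p hp q hq hpq
  have hyq_lt : 1 + q - q * E < 1 + p - p * E := by
    linarith [mul_lt_mul_of_pos_right hpq (sub_pos.2 hE)]
  have hslope := strictAntiOn_log_div_sub_one (hy_mem q hq) (hy_mem p hp) hyq_lt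
  have hlog := log_lt_log (hy_mem q hq).1 hyq_lt
  rw [g_eq_of_ne_zero hE.ne' hp.2, g_eq_of_ne_zero hE.ne' hq.2]
  linarith [mul_lt_mul_of_pos_left hslope (sub_pos.2 hE)]

lemma g_tendsto_atBot {E : ℝ} (hE : 1 < E) : Tendsto (g E) atBot atBot := by
  have hy : Tendsto (fun p : ℝ => 1 + p - p * E) atBot atTop := by
    have h : Tendsto (fun p : ℝ => (1 - E) * p + 1) atBot atTop :=
      tendsto_atTop_add_const_right _ _
        ((tendsto_const_mul_atTop_of_neg (by linarith)).2 tendsto_id)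
    exact h.congr fun p => by ring
  have hbound : Tendsto (fun p : ℝ => (E - 1) - log (1 + p - p * E)) atBot atBot :=
    tendsto_atBot_add_const_left _ _ (tendsto_neg_atTop_atBot.comp (tendsto_log_atTop.comp hy))
  refine tendsto_atBot_mono' _ ?_ hbound
  filter_upwards [eventually_lt_atBot (0 : ℝ)] with p hp
  have hy1 : 1 < 1 + p - p * E := by linarith [mul_neg_of_neg_of_pos hp (sub_pos.2 hE)]
  rw [g_eq_of_ne_zero hE.ne' hp.ne]
  linarith [mul_le_of_le_one_right (sub_nonneg.2 hE.le) (log_div_sub_one_le_one hy1)]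

theorem g_monotone_props (t : ℝ) (ht : 0 < t) :
    StrictMonoOn (fun p : ℝ => -((1 + p) / p) * Real.log (1 + p - p * Real.exp (2 * t)))
      {p : ℝ | p < (Real.exp (2 * t) - 1)⁻¹ ∧ p ≠ 0} ∧
    -((1 + (-1 : ℝ)) / (-1)) * Real.log (1 + (-1) - (-1) * Real.exp (2 * t)) = 0 ∧
    Filter.Tendsto (fun p : ℝ => -((1 + p) / p) * Real.log (1 + p - p * Real.exp (2 * t)))
      Filter.atBot Filter.atBot := by
  have hE : 1 < exp (2 * t) := one_lt_exp_iff.2 (by positivity)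
  exact ⟨g_strictMonoOn hE, by norm_num, g_tendsto_atBot hE⟩
end

section
/- The function v(t,p) = 1/(2p) + 1/p² - ((4-β)/(4p²)) e^{2t} - ((1+p)/p³) ln(1 + p - p e^{2t}) satisfies the first-order PDE v_t - 2p(1+p) v_p = -1 + (6 + 4p) v with initial condition v(0,p) = 1/(2p) + β/(4p²), on the domain of (t,p) with t ≥ 0, p ≠ 0 and 1 + p - p e^{2t} > 0. -/
/-!
Direct verification: both partial derivatives of `v` are computed in closed form, and the
transport equation then reduces to a rational identity in `p`, `e^{2t}` and
`log (1 + p - p e^{2t})`, with the logarithm entering linearly.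
-/

open Real

noncomputable def criticalSolution (β t p : ℝ) : ℝ :=
  1 / (2 * p) + 1 / p ^ 2 - (4 - β) / (4 * p ^ 2) * exp (2 * t)
    - (1 + p) / p ^ 3 * log (1 + p - p * exp (2 * t))

lemma hasDerivAt_exp_const_mul (c t : ℝ) :
    HasDerivAt (fun s => exp (c * s)) (c * exp (c * t)) t := by
  simpa [mul_comm] using ((hasDerivAt_id t).const_mul c).exp

section
variable {β t p : ℝ}

lemma hasDerivAt_criticalSolution_time (hp : p ≠ 0) (hw : 1 + p - p * exp (2 * t) ≠ 0) :
    HasDerivAt (fun s => criticalSolution β s p)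
      (-(4 - β) * exp (2 * t) / (2 * p ^ 2)
        + 2 * (1 + p) * exp (2 * t) / (p ^ 2 * (1 + p - p * exp (2 * t)))) t := by
  have hE := hasDerivAt_exp_const_mul 2 t
  have hlog := ((hE.const_mul p).const_sub (1 + p)).log hw
  refine (((hE.const_mul ((4 - β) / (4 * p ^ 2))).const_sub (1 / (2 * p) + 1 / p ^ 2)).sub
    (hlog.const_mul ((1 + p) / p ^ 3))).congr_deriv ?_
  field_simp
  ring

lemma hasDerivAt_criticalSolution_space (hp : p ≠ 0) (hw : 1 + p - p * exp (2 * t) ≠ 0) :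
    HasDerivAt (fun q => criticalSolution β t q)
      (-1 / (2 * p ^ 2) - 2 / p ^ 3 + (4 - β) * exp (2 * t) / (2 * p ^ 3)
        + (2 * p + 3) / p ^ 4 * log (1 + p - p * exp (2 * t))
        - (1 + p) * (1 - exp (2 * t)) / (p ^ 3 * (1 + p - p * exp (2 * t)))) p := by
  set E := exp (2 * t)
  have hinv (n : ℕ) : HasDerivAt (fun q : ℝ => (q ^ n)⁻¹) (-(n * p ^ (n - 1)) / (p ^ n) ^ 2) p :=
    (hasDerivAt_pow n p).fun_inv (pow_ne_zero n hp)
  have hid := hasDerivAt_id' p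
  have hlog := ((hid.const_add 1).sub (hid.mul_const E)).log hw
  have hsum := ((((hinv 1).const_mul (1 / 2 : ℝ)).add (hinv 2)).sub
    (((hinv 2).const_mul ((4 - β) / 4)).mul_const E)).sub
    (((hid.const_add 1).mul (hinv 3)).mul hlog)
  refine (hsum.congr_deriv ?_).congr_of_eventuallyEq (.of_forall fun q => ?_)
  · simp only [Pi.sub_apply, Pi.mul_apply]
    field_simp
    ring
  · simp only [criticalSolution, Pi.add_apply, Pi.sub_apply, Pi.mul_apply, pow_one]
    ring

lemma criticalSolution_transport (hp : p ≠ 0) (hw : 1 + p - p * exp (2 * t) ≠ 0) :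
    (-(4 - β) * exp (2 * t) / (2 * p ^ 2)
        + 2 * (1 + p) * exp (2 * t) / (p ^ 2 * (1 + p - p * exp (2 * t))))
      - 2 * p * (1 + p) *
        (-1 / (2 * p ^ 2) - 2 / p ^ 3 + (4 - β) * exp (2 * t) / (2 * p ^ 3)
          + (2 * p + 3) / p ^ 4 * log (1 + p - p * exp (2 * t))
          - (1 + p) * (1 - exp (2 * t)) / (p ^ 3 * (1 + p - p * exp (2 * t))))
      = -1 + (6 + 4 * p) * criticalSolution β t p := by
  unfold criticalSolution
  field_simp
  -- the terms over `1 + p - p e^{2t}` collapse because `e^{2t} + (1 + p)(1 - e^{2t}) = 1 + p - p e^{2t}`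
  linear_combination (16 * p * (1 + p)) * mul_inv_cancel₀ hw

end

lemma criticalSolution_time_zero (β p : ℝ) :
    criticalSolution β 0 p = 1 / (2 * p) + β / (4 * p ^ 2) := by
  simp only [criticalSolution, mul_zero, exp_zero, mul_one, add_sub_cancel_right, log_one]
  ring

theorem pde_solution_critical (β : ℝ)
    (v : ℝ → ℝ → ℝ)
    (hv : ∀ t p, v t p = 1 / (2 * p) + 1 / p ^ 2 - (4 - β) / (4 * p ^ 2) * Real.exp (2 * t)
        - (1 + p) / p ^ 3 * Real.log (1 + p - p * Real.exp (2 * t))) :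
    (∀ t p : ℝ, 0 ≤ t → p ≠ 0 → 0 < 1 + p - p * Real.exp (2 * t) →
      ∃ vt vp : ℝ,
        HasDerivAt (fun s => v s p) vt t ∧
        HasDerivAt (fun q => v t q) vp p ∧
        vt - 2 * p * (1 + p) * vp = -1 + (6 + 4 * p) * v t p) ∧
    ∀ p : ℝ, p ≠ 0 → v 0 p = 1 / (2 * p) + β / (4 * p ^ 2) := by
  obtain rfl : v = criticalSolution β := funext₂ hv
  refine ⟨fun t p _ hp hw => ?_, fun p _ => criticalSolution_time_zero β p⟩
  exact ⟨_, _, hasDerivAt_criticalSolution_time hp hw.ne',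
    hasDerivAt_criticalSolution_space hp hw.ne', criticalSolution_transport hp hw.ne'⟩
end

section
/- The function v(t,p) = -(e^{4t}/p²) · (1 - β/4 + (1/p) ln(1 - p + p e^{-2t}) + e^{-2t}(ln(1 - p + p e^{-2t}) - 1) - (p/2) e^{-4t}) satisfies the first-order PDE v_t - 2p² e^{-2t} v_p = -e^{-2t} + (4 + 4 e^{-2t} p) v with initial condition v(0,p) = 1/(2p) + β/(4p²), on the domain t ≥ 0, p ≠ 0 and 1 - p + p e^{-2t} > 0. -/
/-!
Substituting `u = e^{-2t}` writes `v = -F(u, p) / (u p)²` with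
`F(u, p) = profile β u p = 1 - β/4 + (log L)/p + u (log L - 1) - p u²/2`, `L = 1 - p + p u`.
Since `∂ₜ = -2u ∂ᵤ`, the PDE for `v` is equivalent to the transport equation
`F_u + p² F_p = -(u p)²/2`, which holds because both `1/L`-terms of `F_u + p² F_p` combine
into `(1 + p u) (1 - p + p u) / L = 1 + p u`.
-/

open Real

noncomputable def profile (β u p : ℝ) : ℝ :=
  1 - β / 4 + log (1 - p + p * u) / p + u * (log (1 - p + p * u) - 1) - p / 2 * u ^ 2

section Profile

variable {β u p : ℝ}

theorem hasDerivAt_profile_fst (hp : p ≠ 0) (hL : 1 - p + p * u ≠ 0) :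
    HasDerivAt (fun u => profile β u p)
      (log (1 - p + p * u) + (1 + p * u) / (1 - p + p * u) - 1 - p * u) u := by
  have hL' : HasDerivAt (fun u => 1 - p + p * u) p u :=
    (((hasDerivAt_id' u).const_mul p).const_add (1 - p)).congr_deriv (mul_one p)
  have hlog := hL'.log hL
  refine ((((hlog.div_const p).const_add (1 - β / 4)).add
    ((hasDerivAt_id' u).mul (hlog.sub_const 1))).sub
      ((hasDerivAt_pow 2 u).const_mul (p / 2))).congr_deriv ?_
  field_simp
  ring

theorem hasDerivAt_profile_snd (hp : p ≠ 0) (hL : 1 - p + p * u ≠ 0) :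
    HasDerivAt (fun p => profile β u p)
      (-log (1 - p + p * u) / p ^ 2 + (u - 1) * (1 + p * u) / (p * (1 - p + p * u))
        - u ^ 2 / 2) p := by
  have hL' : HasDerivAt (fun p => 1 - p + p * u) (u - 1) p :=
    (((hasDerivAt_id' p).const_sub 1).add ((hasDerivAt_id' p).mul_const u)).congr_deriv (by ring)
  have hlog := hL'.log hL
  refine ((((hlog.div (hasDerivAt_id' p) hp).const_add (1 - β / 4)).add
    ((hlog.sub_const 1).const_mul u)).sub
      (((hasDerivAt_id' p).div_const 2).mul_const (u ^ 2))).congr_deriv ?_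
  field_simp
  ring

theorem profile_transport (hp : p ≠ 0) (hL : 1 - p + p * u ≠ 0) :
    (log (1 - p + p * u) + (1 + p * u) / (1 - p + p * u) - 1 - p * u)
      + p ^ 2 * (-log (1 - p + p * u) / p ^ 2 + (u - 1) * (1 + p * u) / (p * (1 - p + p * u))
        - u ^ 2 / 2) = -(u * p) ^ 2 / 2 := by
  field_simp
  ring

theorem profile_at_one : profile β 1 p = -β / 4 - p / 2 := by
  simp only [profile, mul_one, sub_add_cancel, log_one, zero_div]
  ring

end Profile

theorem pde_of_transport {F : ℝ → ℝ → ℝ} {t p Fu Fp : ℝ} (hp : p ≠ 0)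
    (hFu : HasDerivAt (fun u => F u p) Fu (exp (-2 * t)))
    (hFp : HasDerivAt (fun q => F (exp (-2 * t)) q) Fp p)
    (htransport : Fu + p ^ 2 * Fp = -(exp (-2 * t) * p) ^ 2 / 2) :
    ∃ vt vp : ℝ,
      HasDerivAt (fun s => -(exp (4 * s) / p ^ 2) * F (exp (-2 * s)) p) vt t ∧
      HasDerivAt (fun q => -(exp (4 * t) / q ^ 2) * F (exp (-2 * t)) q) vp p ∧
      vt - 2 * p ^ 2 * exp (-2 * t) * vp
        = -exp (-2 * t) + (4 + 4 * exp (-2 * t) * p) * (-(exp (4 * t) / p ^ 2) * F (exp (-2 * t)) p) := by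
  have hE : HasDerivAt (fun s => exp (4 * s)) (exp (4 * t) * 4) t := by
    simpa using ((hasDerivAt_id' t).const_mul 4).exp
  have hu : HasDerivAt (fun s => exp (-2 * s)) (exp (-2 * t) * (-2)) t := by
    simpa using ((hasDerivAt_id' t).const_mul (-2)).exp
  have hq : HasDerivAt (fun q => exp (4 * t) / q ^ 2) (-(2 * exp (4 * t) / p ^ 3)) p := by
    refine ((hasDerivAt_const p _).div (hasDerivAt_pow 2 p) (pow_ne_zero 2 hp)).congr_deriv ?_
    field_simp
    ring
  have hEu : exp (4 * t) * exp (-2 * t) ^ 2 = 1 := by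
    rw [sq, ← exp_add, ← exp_add]; ring_nf; exact exp_zero
  refine ⟨_, _, (hE.div_const (p ^ 2)).neg.mul (hFu.comp (h₂ := fun u => F u p) t hu),
    hq.neg.mul hFp, ?_⟩
  simp only [Pi.neg_apply]
  generalize exp (-2 * t) = u at *
  generalize exp (4 * t) = E at *
  field_simp
  linear_combination (2 * E * u) * htransport - u * p ^ 2 * hEu

theorem pde_solution_normal (β : ℝ)
    (v : ℝ → ℝ → ℝ)
    (hv : ∀ t p, v t p = -(Real.exp (4 * t) / p ^ 2) *
        (1 - β / 4 + (1 / p) * Real.log (1 - p + p * Real.exp (-2 * t))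
          + Real.exp (-2 * t) * (Real.log (1 - p + p * Real.exp (-2 * t)) - 1)
          - (p / 2) * Real.exp (-4 * t))) :
    (∀ t p : ℝ, 0 ≤ t → p ≠ 0 → 0 < 1 - p + p * Real.exp (-2 * t) →
      ∃ vt vp : ℝ,
        HasDerivAt (fun s => v s p) vt t ∧
        HasDerivAt (fun q => v t q) vp p ∧
        vt - 2 * p ^ 2 * Real.exp (-2 * t) * vp
          = -Real.exp (-2 * t) + (4 + 4 * Real.exp (-2 * t) * p) * v t p) ∧
    ∀ p : ℝ, p ≠ 0 → v 0 p = 1 / (2 * p) + β / (4 * p ^ 2) := by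
  have hv' : v = fun t p => -(exp (4 * t) / p ^ 2) * profile β (exp (-2 * t)) p := by
    ext t p
    rw [hv, profile, show exp (-4 * t) = exp (-2 * t) ^ 2 by rw [sq, ← exp_add]; ring_nf]
    ring
  subst hv'
  refine ⟨fun t p _ hp hL => pde_of_transport hp (hasDerivAt_profile_fst hp hL.ne')
    (hasDerivAt_profile_snd hp hL.ne') (profile_transport hp hL.ne'), fun p hp => ?_⟩
  simp only [mul_zero, exp_zero, profile_at_one]
  field_simp
  ring
end

section
/- The derivative v₀'(p) = -(p+4)/(2p³) of v₀(p) = (p+2)/(2p²) is nonzero for every p in the open upper half-disc {(p+2)² + q² < 4, q > 0} (where p denotes the complex variable), so v₀ is locally injective (conformal) there; and in fact v₀ restricted to this half-disc is injective. -/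
/-!
On the disc `‖z + 2‖ < 2` the factorisation
`v₀ a - v₀ b = (b - a) * ((a + 2) * (b + 2) - 4) / (2 * a ^ 2 * b ^ 2)` gives injectivity, since
`‖(a + 2) * (b + 2)‖ < 4` there; and the disc avoids both the pole `0` of `v₀` and the zero `-4`
of its derivative.
-/

open Set

noncomputable section

namespace HalfDisc

def v₀ (z : ℂ) : ℂ := (z + 2) / (2 * z ^ 2)

theorem hasDerivAt_v₀ {η : ℂ} (hη : η ≠ 0) : HasDerivAt v₀ (-(η + 4) / (2 * η ^ 3)) η := by
  have hden : (2 : ℂ) * η ^ 2 ≠ 0 := by simp [hη]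
  have hnum : HasDerivAt (fun z : ℂ => z + 2) 1 η := (hasDerivAt_id η).add_const 2
  have hsq : HasDerivAt (fun z : ℂ => 2 * z ^ 2) (2 * (2 * η)) η := by
    simpa using (hasDerivAt_pow 2 η).const_mul (2 : ℂ)
  refine (hnum.div hsq hden).congr_deriv ?_
  field_simp
  ring

theorem v₀_sub_v₀ {a b : ℂ} (ha : a ≠ 0) (hb : b ≠ 0) :
    v₀ a - v₀ b = (b - a) * ((a + 2) * (b + 2) - 4) / (2 * a ^ 2 * b ^ 2) := by
  unfold v₀
  field_simp
  ring

theorem ne_of_norm_add_two_lt {z w : ℂ} (hz : ‖z + 2‖ < 2) (hw : ‖w + 2‖ = 2) : z ≠ w := by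
  rintro rfl
  exact hz.ne hw

theorem mul_ne_four_of_norm_add_two_lt {a b : ℂ} (ha : ‖a + 2‖ < 2) (hb : ‖b + 2‖ < 2) :
    (a + 2) * (b + 2) ≠ 4 := by
  intro h
  have : ‖(a + 2) * (b + 2)‖ < 2 * 2 := by
    rw [norm_mul]
    exact mul_lt_mul'' ha hb (norm_nonneg _) (norm_nonneg _)
  norm_num [h] at this

theorem injOn_v₀ : InjOn v₀ {z : ℂ | ‖z + 2‖ < 2} := by
  intro a (ha : ‖a + 2‖ < 2) b (hb : ‖b + 2‖ < 2) hab
  have ha0 : a ≠ 0 := ne_of_norm_add_two_lt ha (by norm_num)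
  have hb0 : b ≠ 0 := ne_of_norm_add_two_lt hb (by norm_num)
  have hfactor := v₀_sub_v₀ ha0 hb0
  rw [hab, sub_self, eq_comm, div_eq_zero_iff, mul_eq_zero, sub_eq_zero, sub_eq_zero] at hfactor
  rcases hfactor with (hba | hprod) | hden
  · exact hba.symm
  · exact absurd hprod (mul_ne_four_of_norm_add_two_lt ha hb)
  · simp [ha0, hb0] at hden

end HalfDisc

end

theorem v0_conformal_on_halfdisc :
    (∀ η : ℂ, ‖η + 2‖ < 2 → 0 < η.im →
      HasDerivAt (fun z : ℂ => (z + 2) / (2 * z ^ 2)) (-(η + 4) / (2 * η ^ 3)) η ∧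
      -(η + 4) / (2 * η ^ 3) ≠ 0) ∧
    Set.InjOn (fun z : ℂ => (z + 2) / (2 * z ^ 2))
      {η : ℂ | ‖η + 2‖ < 2 ∧ 0 < η.im} := by
  refine ⟨fun η hη _ => ?_, HalfDisc.injOn_v₀.mono fun η hη => hη.1⟩
  have hη0 : η ≠ 0 := HalfDisc.ne_of_norm_add_two_lt hη (by norm_num)
  have hη4 : η ≠ -4 := HalfDisc.ne_of_norm_add_two_lt hη (by norm_num)
  refine ⟨HalfDisc.hasDerivAt_v₀ hη0, div_ne_zero ?_ (by simp [hη0])⟩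
  rwa [neg_ne_zero, ← sub_neg_eq_add, sub_ne_zero]
end

section
/- The cubic equation 2ζ³ - ζ - 2 = 0, equivalently the fixed-point equation v₀(ζ) = (ζ+2)/(2ζ²) = ζ, has exactly one root ζ₀ in the open upper half-plane, and this root lies in the open upper half-disc {η : |η+2| < 2, Im η > 0}. -/
/-!
The cubic has a real root `r ∈ (1, 2]`, and `2ζ³ - ζ - 2 = 2(ζ - r)(ζ² + rζ + r⁻¹)`. The quadratic
factor has real coefficients and negative discriminant, so its roots are a conjugate pair with
real part `-r/2` and squared modulus `r⁻¹`; exactly one of them lies in the upper half-plane, and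
`|ζ + 2|² = r⁻¹ - 2r + 4 < 4` because `r > 1`.
-/

open Complex

theorem Complex.re_eq_and_normSq_eq_of_quadratic_eq_zero {b c : ℝ} {ζ : ℂ} (him : ζ.im ≠ 0)
    (h : ζ ^ 2 + b * ζ + c = 0) : ζ.re = -b / 2 ∧ normSq ζ = c := by
  have h_re := congrArg Complex.re h
  have h_im := congrArg Complex.im h
  simp only [add_re, add_im, mul_re, mul_im, ofReal_re, ofReal_im, pow_two, zero_re,
    zero_im] at h_re h_im
  have hx : ζ.re = -b / 2 := by
    have hprod : (2 * ζ.re + b) * ζ.im = 0 := by linear_combination h_im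
    linarith [(mul_eq_zero.mp hprod).resolve_right him]
  refine ⟨hx, ?_⟩
  rw [hx] at h_re
  rw [normSq_apply, hx]
  linear_combination (-1 : ℝ) * h_re

theorem Complex.existsUnique_im_pos_quadratic_eq_zero {b c : ℝ} (hdisc : b ^ 2 < 4 * c) :
    ∃! ζ : ℂ, 0 < ζ.im ∧ ζ ^ 2 + b * ζ + c = 0 := by
  set y := √(c - b ^ 2 / 4)
  have hy : 0 < y := Real.sqrt_pos.mpr (by linarith)
  have hy2 : y ^ 2 = c - b ^ 2 / 4 := Real.sq_sqrt (by linarith)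
  refine ⟨-b / 2 + y * I, ⟨by simpa using hy, ?_⟩, ?_⟩
  · have hy2C : (y : ℂ) ^ 2 = c - b ^ 2 / 4 := by exact_mod_cast hy2
    linear_combination (-1 : ℂ) * hy2C + (y : ℂ) ^ 2 * I_sq
  · rintro ζ ⟨him, hζ⟩
    obtain ⟨hre, hnorm⟩ := re_eq_and_normSq_eq_of_quadratic_eq_zero him.ne' hζ
    have him_eq : ζ.im = y := by
      rw [normSq_apply, hre] at hnorm
      rw [← Real.sqrt_sq him.le]
      congr 1
      linear_combination hnorm
    apply Complex.ext <;> simp [hre, him_eq]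

theorem exists_root_mem_Ioc_one_two : ∃ r ∈ Set.Ioc (1 : ℝ) 2, 2 * r ^ 3 - r - 2 = 0 := by
  obtain ⟨r, ⟨hr1, hr2⟩, hr⟩ := intermediate_value_Icc (by norm_num : (1 : ℝ) ≤ 2)
    (f := fun r : ℝ => 2 * r ^ 3 - r - 2) (by fun_prop)
    (show (0 : ℝ) ∈ Set.Icc (2 * 1 ^ 3 - 1 - 2) (2 * 2 ^ 3 - 2 - 2) by norm_num)
  refine ⟨r, ⟨lt_of_le_of_ne hr1 ?_, hr2⟩, hr⟩
  rintro rfl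
  norm_num at hr

theorem cubic_eq_mul_quadratic_of_root {r : ℝ} (hr0 : r ≠ 0) (hr : 2 * r ^ 3 - r - 2 = 0)
    (ζ : ℂ) :
    2 * ζ ^ 3 - ζ - 2 = 2 * (ζ - r) * (ζ ^ 2 + r * ζ + (r⁻¹ : ℝ)) := by
  have hrC : 2 * (r : ℂ) ^ 3 - r - 2 = 0 := by exact_mod_cast hr
  have hr0C : (r : ℂ) ≠ 0 := ofReal_ne_zero.mpr hr0
  push_cast
  field_simp
  linear_combination ζ * hrC

theorem cubic_unique_root_upper_halfplane :
    (∃! ζ : ℂ, 0 < ζ.im ∧ 2 * ζ ^ 3 - ζ - 2 = 0) ∧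
    ∀ ζ : ℂ, 0 < ζ.im → 2 * ζ ^ 3 - ζ - 2 = 0 → ‖ζ + 2‖ < 2 := by
  obtain ⟨r, ⟨hr1, hr2⟩, hr⟩ := exists_root_mem_Ioc_one_two
  have hr0 : 0 < r := by linarith
  have hquad : ∀ ζ : ℂ, 0 < ζ.im →
      (2 * ζ ^ 3 - ζ - 2 = 0 ↔ ζ ^ 2 + r * ζ + (r⁻¹ : ℝ) = 0) := by
    intro ζ him
    have hζr : ζ - r ≠ 0 := fun h => by simp [sub_eq_zero.mp h] at him
    simp [cubic_eq_mul_quadratic_of_root hr0.ne' hr, hζr]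
  refine ⟨?_, fun ζ him hζ => ?_⟩
  · have hdisc : r ^ 2 < 4 * r⁻¹ := by
      rw [← div_eq_mul_inv, lt_div_iff₀ hr0]
      nlinarith
    refine (existsUnique_congr fun ζ => ?_).mpr (existsUnique_im_pos_quadratic_eq_zero hdisc)
    exact and_congr_right fun him => hquad ζ him
  · obtain ⟨hre, hnorm⟩ :=
      re_eq_and_normSq_eq_of_quadratic_eq_zero him.ne' ((hquad ζ him).mp hζ)
    have hsq : ‖ζ + 2‖ ^ 2 = r⁻¹ - 2 * r + 4 := by
      rw [Complex.sq_norm, normSq_apply, ← hnorm, normSq_apply]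
      simp only [add_re, add_im, re_ofNat, im_ofNat, hre]
      ring
    have hinv : r⁻¹ < 1 := inv_lt_one_of_one_lt₀ hr1
    nlinarith [norm_nonneg (ζ + 2)]
end

section
/- The function ρ(λ) = (1/(4π)) · √(4(−λ) − 1)/(−λ), supported on λ ∈ (−∞, −1/4), satisfies ∫_{−∞}^{−1/4} ρ(λ)/λ dλ = −1/2. -/
/-!
After the substitution `t = -λ` the integral becomes `-(4π)⁻¹ ∫_{1/4}^∞ √(4t - 1) / t² dt`.
The substitution `s = √(4t - 1)` turns this integrand into `8s² / (1 + s²)²`, which yields the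
primitive `4 arctan √(4t - 1) - √(4t - 1) / t`; it vanishes at `1/4` and tends to `2π` at infinity,
so the integral is `-2π / (4π) = -1/2`.
-/

open MeasureTheory Set Real Filter Topology

noncomputable def sqrtDivSqPrimitive (t : ℝ) : ℝ :=
  4 * arctan (√(4 * t - 1)) - √(4 * t - 1) / t

lemma hasDerivAt_sqrtDivSqPrimitive {t : ℝ} (ht : 1 / 4 < t) :
    HasDerivAt sqrtDivSqPrimitive (√(4 * t - 1) / t ^ 2) t := by
  have ht0 : t ≠ 0 := by positivity
  have hpos : 0 < 4 * t - 1 := by linarith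
  have hsqrt : HasDerivAt (fun t ↦ √(4 * t - 1)) (4 / (2 * √(4 * t - 1))) t := by
    simpa using (((hasDerivAt_id t).const_mul 4).sub_const 1).sqrt hpos.ne'
  refine ((hsqrt.arctan.const_mul 4).sub (hsqrt.div (hasDerivAt_id t) ht0)).congr_deriv ?_
  rw [id, sq_sqrt hpos.le]
  field_simp
  rw [sq_sqrt hpos.le]
  ring

lemma continuousAt_sqrtDivSqPrimitive {t : ℝ} (ht : t ≠ 0) :
    ContinuousAt sqrtDivSqPrimitive t := by
  unfold sqrtDivSqPrimitive
  fun_prop (disch := exact ht)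

lemma tendsto_sqrt_affine_div_atTop (a b : ℝ) :
    Tendsto (fun t ↦ √(a * t + b) / t) atTop (𝓝 0) := by
  have hquot : Tendsto (fun t ↦ a / t + b / t ^ 2) atTop (𝓝 0) := by
    simpa using (tendsto_const_nhds.div_atTop tendsto_id).add
      (tendsto_const_nhds.div_atTop (tendsto_pow_atTop (α := ℝ) two_ne_zero))
  have hsqrt_quot := (continuous_sqrt.tendsto 0).comp hquot
  rw [sqrt_zero] at hsqrt_quot
  refine hsqrt_quot.congr' ?_
  filter_upwards [eventually_gt_atTop 0] with t ht
  rw [Function.comp_apply, ← sqrt_sq ht.le, ← sqrt_div' _ (sq_nonneg t), sqrt_sq ht.le]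
  congr 1
  field_simp

lemma tendsto_sqrtDivSqPrimitive_atTop :
    Tendsto sqrtDivSqPrimitive atTop (𝓝 (2 * π)) := by
  have hsqrt : Tendsto (fun t ↦ √(4 * t - 1)) atTop atTop :=
    tendsto_sqrt_atTop.comp
      (tendsto_atTop_add_const_right _ _ (tendsto_id.const_mul_atTop four_pos))
  have harctan := (tendsto_nhds_of_tendsto_nhdsWithin tendsto_arctan_atTop).comp hsqrt
  have hquot : Tendsto (fun t ↦ √(4 * t - 1) / t) atTop (𝓝 0) := by
    simpa [sub_eq_add_neg] using tendsto_sqrt_affine_div_atTop 4 (-1)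
  rw [show 2 * π = 4 * (π / 2) - 0 by ring]
  exact (harctan.const_mul 4).sub hquot

lemma integral_sqrt_div_sq :
    ∫ t in Ioi (1 / 4 : ℝ), √(4 * t - 1) / t ^ 2 = 2 * π := by
  have hzero : sqrtDivSqPrimitive (1 / 4) = 0 := by norm_num [sqrtDivSqPrimitive]
  rw [integral_Ioi_of_hasDerivAt_of_nonneg
    (continuousAt_sqrtDivSqPrimitive (by norm_num)).continuousWithinAt
    (fun t ht ↦ hasDerivAt_sqrtDivSqPrimitive ht) (fun t _ ↦ by positivity)
    tendsto_sqrtDivSqPrimitive_atTop, hzero, sub_zero]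

theorem rho_integral :
    ∫ l in Set.Iio (-1 / 4 : ℝ),
      (1 / (4 * Real.pi) * Real.sqrt (-4 * l - 1) / (-l)) / l = -1 / 2 := by
  have hreflect : ∀ t : ℝ, (1 / (4 * π) * √(-4 * -t - 1) / -(-t)) / -t
      = -(1 / (4 * π)) * (√(4 * t - 1) / t ^ 2) := fun t ↦ by
    rw [neg_neg, neg_mul_neg]; ring
  rw [show (-1 / 4 : ℝ) = -(1 / 4) by norm_num, ← integral_Iic_eq_integral_Iio,
    ← integral_comp_neg_Ioi]
  simp_rw [hreflect]
  rw [integral_const_mul, integral_sqrt_div_sq]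
  field_simp
  norm_num
end
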